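/- arXiv:0906.2395 — 5 statements merged into one kernel-verified Lean document; each statement's English description precedes it below -/
import Mathlib

section
/- Let X = {[s_1,t_1], ..., [s_k,t_k]} be a finite set of closed integer intervals and let X' = {[s'_1,t_1], ..., [s'_k,t_k]} be an associated set of intervals such that for each 1 ≤ i ≤ k, s_i ≤ s'_i ≤ t_i and |[s'_i,t_i]| ≥ λ·|[s_i,t_i]|, where 0 ≤ λ ≤ 1. Then the number of distinct integers in the union of the intervals of X' is at least λ times the number of distinct integers in the union of the intervals of X. -/
/-!
Induct on the family, removing the interval `[s, t]` with the largest right end. Let `[s₁, t₁]`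
have the next largest right end. If `s ≤ s₁`, then `[s₁, t₁] ⊆ [s, t]`: dropping it leaves the
first union unchanged and can only shrink the second. Otherwise `[s, t₁] ⊆ [s₁, t₁]`, so `[s, t]`
adds at most `[max s (t₁ + 1), t]` to the first union, while `[s', t]` adds all of
`[max s' (t₁ + 1), t]` to the second, as the remaining shrunk intervals end by `t₁`. Truncating
at a common left end `a` turns the lengths of `[s, t]` and `[s', t]` into their minima with
`t + 1 - a`, and such minima keep the ratio `λ ≤ 1`.
-/

open Finset

theorem Int.card_Icc_max (x a t : ℤ) : #(Icc (max x a) t) = min #(Icc x t) #(Icc a t) := by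
  simp only [Int.card_Icc]
  omega

theorem mul_card_Icc_max_le {lam : ℝ} (hlam0 : 0 ≤ lam) (hlam1 : lam ≤ 1) {s s' t : ℤ}
    (h : lam * #(Icc s t) ≤ #(Icc s' t)) (a : ℤ) :
    lam * #(Icc (max s a) t) ≤ #(Icc (max s' a) t) := by
  rw [Int.card_Icc_max, Int.card_Icc_max, Nat.cast_min, Nat.cast_min]
  calc lam * min (#(Icc s t) : ℝ) #(Icc a t)
      ≤ min (lam * #(Icc s t)) #(Icc a t) :=
        le_min (mul_le_mul_of_nonneg_left (min_le_left _ _) hlam0)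
          ((mul_le_of_le_one_left (by positivity) hlam1).trans (min_le_right _ _))
    _ ≤ min (#(Icc s' t) : ℝ) #(Icc a t) := min_le_min_right _ h

theorem mul_card_Icc_union_le {lam : ℝ} (hlam0 : 0 ≤ lam) (hlam1 : lam ≤ 1)
    {A A' : Finset ℤ} {s s' t a : ℤ} (hA : Ico s a ⊆ A) (hA' : ∀ x ∈ A', x < a)
    (hAA' : lam * #A ≤ #A') (h : lam * #(Icc s t) ≤ #(Icc s' t)) :
    lam * #(Icc s t ∪ A) ≤ #(Icc s' t ∪ A') := by
  have hle : #(Icc s t ∪ A) ≤ #(Icc (max s a) t) + #A := by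
    refine (card_le_card fun x hx => ?_).trans (card_union_le _ _)
    simp only [mem_union, mem_Icc, max_le_iff] at hx ⊢
    rcases hx with hx | hx
    · by_cases hxa : a ≤ x
      · exact Or.inl ⟨⟨hx.1, hxa⟩, hx.2⟩
      · exact Or.inr (hA (mem_Ico.2 ⟨hx.1, not_le.1 hxa⟩))
    · exact Or.inr hx
  have hge : #(Icc (max s' a) t) + #A' ≤ #(Icc s' t ∪ A') := by
    have hdisj : Disjoint (Icc (max s' a) t) A' := disjoint_left.2 fun x hx hxA' =>
      (hA' x hxA').not_ge (le_of_max_le_right (mem_Icc.1 hx).1)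
    rw [← card_union_of_disjoint hdisj]
    exact card_le_card (union_subset_union (Icc_subset_Icc_left (le_max_left _ _)) le_rfl)
  have hI := mul_card_Icc_max_le hlam0 hlam1 h a
  calc lam * #(Icc s t ∪ A) ≤ lam * (#(Icc (max s a) t) + #A) :=
        mul_le_mul_of_nonneg_left (by exact_mod_cast hle) hlam0
    _ ≤ #(Icc (max s' a) t) + #A' := by linarith
    _ ≤ #(Icc s' t ∪ A') := by exact_mod_cast hge

theorem Finset.biUnion_erase_of_subset {ι α : Type*} [DecidableEq ι] [DecidableEq α]
    {T : Finset ι} {f : ι → Finset α} {i j : ι} (hi : i ∈ T) (hj : j ∈ T) (hij : i ≠ j)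
    (hf : f j ⊆ f i) : (T.erase j).biUnion f = T.biUnion f := by
  rw [← insert_erase hj, biUnion_insert, erase_insert (notMem_erase j T)]
  exact (union_eq_right.2 (hf.trans (subset_biUnion_of_mem f (mem_erase.2 ⟨hij, hi⟩)))).symm

theorem mul_card_biUnion_Icc_le {ι : Type*} [DecidableEq ι] {lam : ℝ} (hlam0 : 0 ≤ lam)
    (hlam1 : lam ≤ 1) (s s' t : ι → ℤ) (T : Finset ι)
    (h : ∀ i ∈ T, lam * #(Icc (s i) (t i)) ≤ #(Icc (s' i) (t i))) :
    lam * #(T.biUnion fun i => Icc (s i) (t i)) ≤ #(T.biUnion fun i => Icc (s' i) (t i)) := by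
  induction T using Finset.strongInduction with
  | H T ih =>
    obtain rfl | hT := T.eq_empty_or_nonempty
    · simp
    obtain ⟨i, hi, hmax⟩ := T.exists_max_image t hT
    obtain hR | hR := (T.erase i).eq_empty_or_nonempty
    · rw [(erase_eq_empty_iff T i).1 hR |>.resolve_left hT.ne_empty, singleton_biUnion,
        singleton_biUnion]
      exact h i hi
    obtain ⟨j, hjR, hmaxR⟩ := (T.erase i).exists_max_image t hR
    have hj : j ∈ T := mem_of_mem_erase hjR
    have hji : j ≠ i := ne_of_mem_erase hjR
    by_cases hnest : s i ≤ s j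
    · have hsub : Icc (s j) (t j) ⊆ Icc (s i) (t i) := Icc_subset_Icc hnest (hmax j hj)
      calc lam * #(T.biUnion fun i => Icc (s i) (t i))
          = lam * #((T.erase j).biUnion fun i => Icc (s i) (t i)) := by
            rw [biUnion_erase_of_subset hi hj hji.symm hsub]
        _ ≤ #((T.erase j).biUnion fun i => Icc (s' i) (t i)) :=
            ih _ (erase_ssubset hj) fun k hk => h k (mem_of_mem_erase hk)
        _ ≤ #(T.biUnion fun i => Icc (s' i) (t i)) := by
            gcongr
            exact erase_subset j T
    · rw [← insert_erase hi, biUnion_insert, biUnion_insert]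
      refine mul_card_Icc_union_le hlam0 hlam1 (a := t j + 1) ?_ ?_
        (ih _ (erase_ssubset hi) fun k hk => h k (mem_of_mem_erase hk)) (h i hi)
      · refine (Ico_subset_Ico_left (le_of_not_ge hnest)).trans fun x hx => ?_
        obtain ⟨hsx, hxt⟩ := mem_Ico.1 hx
        exact mem_biUnion.2 ⟨j, hjR, mem_Icc.2 ⟨hsx, Int.lt_add_one_iff.1 hxt⟩⟩
      · intro x hx
        obtain ⟨k, hk, hxk⟩ := mem_biUnion.1 hx
        linarith [(mem_Icc.1 hxk).2, hmaxR k hk]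

theorem interval_shrinking_general (k : ℕ) (s t s' : Fin k → ℤ) (lam : ℝ)
    (hlam0 : 0 ≤ lam) (hlam1 : lam ≤ 1)
    (hs'l : ∀ i, s i ≤ s' i) (hs'r : ∀ i, s' i ≤ t i)
    (hlen : ∀ i, ((t i - s' i + 1 : ℤ) : ℝ) ≥ lam * ((t i - s i + 1 : ℤ) : ℝ)) :
    ((Finset.univ.biUnion (fun i => Finset.Icc (s' i) (t i))).card : ℝ)
      ≥ lam * ((Finset.univ.biUnion (fun i => Finset.Icc (s i) (t i))).card : ℝ) := by
  refine mul_card_biUnion_Icc_le hlam0 hlam1 s s' t univ fun i _ => ?_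
  have hcard {a b : ℤ} (hab : a ≤ b + 1) : (#(Icc a b) : ℝ) = ((b - a + 1 : ℤ) : ℝ) := by
    rw [← Int.cast_natCast, Int.card_Icc_of_le _ _ hab, add_sub_right_comm]
  rw [hcard (by linarith [hs'l i, hs'r i]), hcard (by linarith [hs'r i])]
  exact hlen i

/-- Interval shrinking lemma: if each interval `[s'_i, t_i]` retains a `λ`-fraction
of the length of `[s_i, t_i]`, then the union retains a `λ`-fraction of the union. -/
theorem interval_shrinking (k : ℕ) (s t s' : Fin k → ℤ) (lam : ℝ)
    (hlam0 : 0 ≤ lam) (hlam1 : lam ≤ 1)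
    (hst : ∀ i, s i ≤ t i)
    (hs'l : ∀ i, s i ≤ s' i) (hs'r : ∀ i, s' i ≤ t i)
    (hlen : ∀ i, ((t i - s' i + 1 : ℤ) : ℝ) ≥ lam * ((t i - s i + 1 : ℤ) : ℝ)) :
    ((Finset.univ.biUnion (fun i => Finset.Icc (s' i) (t i))).card : ℝ)
      ≥ lam * ((Finset.univ.biUnion (fun i => Finset.Icc (s i) (t i))).card : ℝ) :=
  interval_shrinking_general k s t s' lam hlam0 hlam1 hs'l hs'r hlen
end

section
/- Let X = {[s_1,t_1], ..., [s_k,t_k]} be a finite set of closed integer intervals whose union I is a single contiguous interval [s_1, t'], and let X' be the associated set with intervals [s'_i, t_i] where s_i ≤ s'_i ≤ t_i and t_i - s'_i + 1 ≥ λ(t_i - s_i + 1) for all i. If the union I' of X' is the contiguous interval [s', t'] where [s'_1, t_1] is an interval with s_1 minimal among the s_i, then (t' - s'_1 + 1) ≥ λ(t' - s_1 + 1); in particular |I'| ≥ λ|I|. -/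
/-!
Extending `[s i₀, t i₀]` and its shrunk version `[s' i₀, t i₀]` to the right up to `t'` adds
the same number of points to both, and adding a common nonnegative amount to both sides of
`λ x ≤ y` preserves it when `λ ≤ 1`.
-/

theorem mul_add_le_add_of_le_one {α : Type*} [Semiring α] [PartialOrder α]
    [IsOrderedRing α] {c x y d : α} (hc : c ≤ 1) (hd : 0 ≤ d) (h : c * x ≤ y) :
    c * (x + d) ≤ y + d := by
  rw [mul_add]
  exact add_le_add h (mul_le_of_le_one_left hd hc)

theorem Int.cast_card_Icc {R : Type*} [AddGroupWithOne R] {a b : ℤ} (h : a ≤ b + 1) :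
    ((Finset.Icc a b).card : R) = ((b - a + 1 : ℤ) : R) := by
  have hcard : ((Finset.Icc a b).card : ℤ) = b - a + 1 := by
    rw [Int.card_Icc]
    omega
  rw [← hcard, Int.cast_natCast]

theorem mul_length_le_of_extend_right {lam : ℝ} (hlam : lam ≤ 1) {s s' t t' : ℤ} (ht : t ≤ t')
    (h : lam * ((t - s + 1 : ℤ) : ℝ) ≤ ((t - s' + 1 : ℤ) : ℝ)) :
    lam * ((t' - s + 1 : ℤ) : ℝ) ≤ ((t' - s' + 1 : ℤ) : ℝ) := by
  have hd : (0 : ℝ) ≤ ((t' - t : ℤ) : ℝ) := by exact_mod_cast sub_nonneg.2 ht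
  have := mul_add_le_add_of_le_one hlam hd h
  push_cast at this ⊢
  linarith

theorem interval_shrinking_contiguous_general (k : ℕ) (s t s' : Fin k → ℤ) (lam : ℝ)
    (hlam1 : lam ≤ 1)
    (hst : ∀ i, s i ≤ t i)
    (hs'r : ∀ i, s' i ≤ t i)
    (hlen : ∀ i, ((t i - s' i + 1 : ℤ) : ℝ) ≥ lam * ((t i - s i + 1 : ℤ) : ℝ))
    (i₀ : Fin k)
    (t' s'' : ℤ)
    (hs'' : s'' ≤ s' i₀) (ht' : t i₀ ≤ t') :
    ((t' - s' i₀ + 1 : ℤ) : ℝ) ≥ lam * ((t' - s i₀ + 1 : ℤ) : ℝ) ∧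
    ((Finset.Icc s'' t').card : ℝ) ≥ lam * ((Finset.Icc (s i₀) t').card : ℝ) := by
  have hkey := mul_length_le_of_extend_right hlam1 ht' (hlen i₀)
  refine ⟨hkey, ?_⟩
  have hsub : ((t' - s' i₀ + 1 : ℤ) : ℝ) ≤ ((t' - s'' + 1 : ℤ) : ℝ) := by
    exact_mod_cast (by omega : t' - s' i₀ + 1 ≤ t' - s'' + 1)
  rw [Int.cast_card_Icc (by linarith [hs'r i₀]), Int.cast_card_Icc (by linarith [hst i₀])]
  linarith

/-- The contiguous case of the interval shrinking lemma: if the union `I` of the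
intervals is the contiguous interval `[s i₀, t']` with `s i₀` minimal, and the union `I'`
of the shrunk intervals is the contiguous interval `[s'', t']` with `s'' ≤ s' i₀` and
`t' ≥ t i₀`, then `t' - s' i₀ + 1 ≥ λ (t' - s i₀ + 1)`; in particular `|I'| ≥ λ |I|`. -/
theorem interval_shrinking_contiguous (k : ℕ) (s t s' : Fin k → ℤ) (lam : ℝ)
    (hlam0 : 0 ≤ lam) (hlam1 : lam ≤ 1)
    (hst : ∀ i, s i ≤ t i)
    (hs'l : ∀ i, s i ≤ s' i) (hs'r : ∀ i, s' i ≤ t i)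
    (hlen : ∀ i, ((t i - s' i + 1 : ℤ) : ℝ) ≥ lam * ((t i - s i + 1 : ℤ) : ℝ))
    (i₀ : Fin k) (hmin : ∀ i, s i₀ ≤ s i)
    (t' s'' : ℤ)
    (hI : Finset.univ.biUnion (fun i => Finset.Icc (s i) (t i)) = Finset.Icc (s i₀) t')
    (hI' : Finset.univ.biUnion (fun i => Finset.Icc (s' i) (t i)) = Finset.Icc s'' t')
    (hs'' : s'' ≤ s' i₀) (ht' : t i₀ ≤ t') :
    ((t' - s' i₀ + 1 : ℤ) : ℝ) ≥ lam * ((t' - s i₀ + 1 : ℤ) : ℝ) ∧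
    ((Finset.Icc s'' t').card : ℝ) ≥ lam * ((Finset.Icc (s i₀) t').card : ℝ) :=
  interval_shrinking_contiguous_general k s t s' lam hlam1 hst hs'r hlen i₀ t' s'' hs'' ht'
end

section
/- Let m : ℕ → ℝ≥0 be a non-decreasing function arising from requests with arrival times a_1, ..., a_n ≤ o, i.e., define for t ≥ o the quantity F^e(t) = Σ_i m_i(t - a_i), where each m_i : ℕ → ℝ≥0 is non-decreasing and satisfies m_i(⌈λ·t⌉) ≥ λ·m_i(t) for λ ∈ [0,1] (linear growth lower bound, as for flow time m_i(t)=t). If e > o and t ≥ o + λ(e - o) for some λ ∈ [0,1], then F^e(t) ≥ λ·F^e(e). -/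
/-!
A request that arrived at `a ≤ o` has age `t - a ≥ (1 - λ)(o - a) + λ(e - a) ≥ λ(e - a)` at time `t`,
so monotonicity and the growth bound give `m(t - a) ≥ m(⌈λ(e - a)⌉) ≥ λ · m(e - a)`; summing over
the requests gives the claim.
-/

open Finset Set

lemma ceil_mul_sub_le_sub {a o e t : ℕ} {lam : ℝ} (hl0 : 0 ≤ lam) (hl1 : lam ≤ 1) (hao : a ≤ o)
    (ht : (o : ℝ) + lam * ((e : ℝ) - o) ≤ t) :
    ⌈lam * ((e - a : ℕ) : ℝ)⌉₊ ≤ t - a := by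
  rcases le_or_gt a e with hae | hea
  · have hao' : (a : ℝ) ≤ o := by exact_mod_cast hao
    have hage : lam * ((e : ℝ) - a) ≤ (t : ℝ) - a := by nlinarith
    have hat : a ≤ t := by
      have : 0 ≤ lam * ((e : ℝ) - a) := mul_nonneg hl0 (sub_nonneg.2 (by exact_mod_cast hae))
      exact_mod_cast (by linarith : (a : ℝ) ≤ t)
    rw [Nat.ceil_le, Nat.cast_sub hae, Nat.cast_sub hat]
    exact hage
  · simp [Nat.sub_eq_zero_of_le hea.le]

lemma mul_apply_sub_le_apply_sub {f : ℕ → ℝ} (hf : Monotone f)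
    (hgrow : ∀ μ ∈ Icc (0 : ℝ) 1, ∀ x : ℕ, f ⌈μ * (x : ℝ)⌉₊ ≥ μ * f x)
    {a o e t : ℕ} {lam : ℝ} (hlam : lam ∈ Icc (0 : ℝ) 1) (hao : a ≤ o)
    (ht : (o : ℝ) + lam * ((e : ℝ) - o) ≤ t) :
    lam * f (e - a) ≤ f (t - a) :=
  calc lam * f (e - a) ≤ f ⌈lam * ((e - a : ℕ) : ℝ)⌉₊ := hgrow lam hlam (e - a)
    _ ≤ f (t - a) := hf (ceil_mul_sub_le_sub hlam.1 hlam.2 hao ht)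

theorem early_requests_flow_general (n : ℕ) (m : Fin n → ℕ → ℝ) (a : Fin n → ℕ)
    (o e t : ℕ) (lam : ℝ)
    (hmono : ∀ i, Monotone (m i))
    (hgrow : ∀ i, ∀ μ ∈ Set.Icc (0:ℝ) 1, ∀ x : ℕ, m i ⌈μ * (x : ℝ)⌉₊ ≥ μ * m i x)
    (ha : ∀ i, a i ≤ o)
    (hlam : lam ∈ Set.Icc (0:ℝ) 1)
    (ht : (t : ℝ) ≥ (o : ℝ) + lam * ((e : ℝ) - (o : ℝ))) :
    ∑ i, m i (t - a i) ≥ lam * ∑ i, m i (e - a i) := by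
  rw [ge_iff_le, mul_sum]
  exact sum_le_sum fun i _ => mul_apply_sub_le_apply_sub (hmono i) (hgrow i) hlam (ha i) ht

/-- Early requests lemma (discrete version): if all arrival times are at most `o`,
the cost functions are non-decreasing with a linear growth lower bound, and
`t ≥ o + λ(e - o)`, then `F^e(t) ≥ λ · F^e(e)`. -/
theorem early_requests_flow (n : ℕ) (m : Fin n → ℕ → ℝ) (a : Fin n → ℕ)
    (o e t : ℕ) (lam : ℝ)
    (hm0 : ∀ i x, 0 ≤ m i x)
    (hmono : ∀ i, Monotone (m i))
    (hgrow : ∀ i, ∀ μ ∈ Set.Icc (0:ℝ) 1, ∀ x : ℕ, m i ⌈μ * (x : ℝ)⌉₊ ≥ μ * m i x)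
    (ha : ∀ i, a i ≤ o)
    (hlam : lam ∈ Set.Icc (0:ℝ) 1)
    (hoe : o < e)
    (ht : (t : ℝ) ≥ (o : ℝ) + lam * ((e : ℝ) - (o : ℝ))) :
    ∑ i, m i (t - a i) ≥ lam * ∑ i, m i (e - a i) :=
  early_requests_flow_general n m a o e t lam hmono hgrow ha hlam ht
end

section
/- Let m_i : ℝ≥0 → ℝ≥0 (i = 1,...,n) be non-decreasing functions, each satisfying m_i(λ·t) ≥ h(λ)·m_i(t) for all λ ∈ [0,1], t ≥ 0, where h : [0,1] → ℝ≥0. Let a_1, ..., a_n ≤ o be arrival times and e > o. Define M^e(t) = Σ_i m_i(t - a_i) for t ≥ o. Then for any λ ∈ [0,1] and any t with o + λ(e - o) ≤ t ≤ e, M^e(t) ≥ h(λ)·M^e(e). -/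
/-!
The inequality holds summand by summand. A request that arrived at `a ≤ o` has, at time `t`,
waited `t - a ≥ λ (e - a)`: the part `e - o` of its final waiting time is covered in proportion
`λ` by the choice of `t`, and the part `o - a` is covered entirely. Monotonicity of `m i` and the
scaling bound then give `m i (t - a) ≥ m i (λ (e - a)) ≥ h λ · m i (e - a)`.
-/

open Set

theorem mul_sub_le_sub_of_add_mul_le {a o e t lam : ℝ} (ha : a ≤ o) (hlam : lam ≤ 1)
    (ht : o + lam * (e - o) ≤ t) : lam * (e - a) ≤ t - a := by
  nlinarith

theorem MonotoneOn.mul_le_of_scaling {f h : ℝ → ℝ} (hmono : MonotoneOn f (Ici 0))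
    (hgrow : ∀ μ ∈ Icc (0:ℝ) 1, ∀ x : ℝ, 0 ≤ x → f (μ * x) ≥ h μ * f x)
    {lam x y : ℝ} (hlam : lam ∈ Icc (0:ℝ) 1) (hx : 0 ≤ x) (hxy : lam * x ≤ y) :
    h lam * f x ≤ f y := by
  have hlx : 0 ≤ lam * x := mul_nonneg hlam.1 hx
  calc h lam * f x ≤ f (lam * x) := hgrow lam hlam x hx
    _ ≤ f y := hmono hlx (hlx.trans hxy) hxy

theorem early_requests_general_general (n : ℕ) (m : Fin n → ℝ → ℝ) (h : ℝ → ℝ)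
    (a : Fin n → ℝ) (o e : ℝ)
    (hmono : ∀ i, MonotoneOn (m i) (Set.Ici (0:ℝ)))
    (hgrow : ∀ i, ∀ μ ∈ Set.Icc (0:ℝ) 1, ∀ x : ℝ, 0 ≤ x → m i (μ * x) ≥ h μ * m i x)
    (ha : ∀ i, a i ≤ o) (hoe : o < e)
    (lam : ℝ) (hlam : lam ∈ Set.Icc (0:ℝ) 1)
    (t : ℝ) (ht1 : o + lam * (e - o) ≤ t) :
    ∑ i, m i (t - a i) ≥ h lam * ∑ i, m i (e - a i) := by
  rw [ge_iff_le, Finset.mul_sum]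
  refine Finset.sum_le_sum fun i _ => (hmono i).mul_le_of_scaling (hgrow i) hlam ?_ ?_
  · linarith [ha i]
  · exact mul_sub_le_sub_of_add_mul_le (ha i) hlam.2 ht1

/-- General framework version of the early requests lemma (Lemma 3.3): with
non-decreasing cost functions `m i` satisfying the growth bound via `h`, arrivals
at or before `o`, and `o + λ(e-o) ≤ t ≤ e`, we have `M^e(t) ≥ h(λ)·M^e(e)`. -/
theorem early_requests_general (n : ℕ) (m : Fin n → ℝ → ℝ) (h : ℝ → ℝ)
    (a : Fin n → ℝ) (o e : ℝ)
    (hm0 : ∀ i x, 0 ≤ x → 0 ≤ m i x)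
    (hmono : ∀ i, MonotoneOn (m i) (Set.Ici (0:ℝ)))
    (hgrow : ∀ i, ∀ μ ∈ Set.Icc (0:ℝ) 1, ∀ x : ℝ, 0 ≤ x → m i (μ * x) ≥ h μ * m i x)
    (ha : ∀ i, a i ≤ o) (hoe : o < e)
    (lam : ℝ) (hlam : lam ∈ Set.Icc (0:ℝ) 1)
    (t : ℝ) (ht1 : o + lam * (e - o) ≤ t) (ht2 : t ≤ e) :
    ∑ i, m i (t - a i) ≥ h lam * ∑ i, m i (e - a i) :=
  early_requests_general_general n m h a o e hmono hgrow ha hoe lam hlam t ht1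
end

section
/- Let I_1, ..., I_m be closed integer intervals, no one of which is contained in another, sorted in increasing order of starting points, and greedily select a subsequence as follows: pick I_1, then repeatedly pick the interval that overlaps least with (or starts immediately after) the previously chosen interval, indexing chosen intervals 1, 2, 3, .... Partition the chosen intervals into odd-indexed set I_odd and even-indexed set I_even. Then within I_odd no two intervals overlap, within I_even no two intervals overlap, and |⋃I_odd| + |⋃I_even| ≥ |⋃_{i=1}^m I_i| where |·| counts distinct integers. -/
/-!
Greedy chain: after choosing the interval `a`, choose next the last interval `j` that starts
at most at `t a + 1` (or the next interval if there is none). Both endpoints increase with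
the index (the right ones since no interval contains another), so every interval strictly
between `a` and `j` lies in `I a ∪ I j`, and every interval after `j` lies strictly to the
right of `I a`. Hence chosen intervals two steps apart are disjoint, and the chain splits
into its odd and even members. Inductively, `a` is put in front of the two families
covering the intervals from `j` on, with their roles swapped.
-/

open Finset

namespace IntervalSelection

variable {α ι : Type*} [DecidableEq α]

structure IsDisjointPairCover (F : ι → Finset α) (S A B : Finset ι) : Prop where
  subset_left : A ⊆ S
  subset_right : B ⊆ S
  pairwiseDisjoint_left : (A : Set ι).PairwiseDisjoint F
  pairwiseDisjoint_right : (B : Set ι).PairwiseDisjoint F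
  biUnion_subset : S.biUnion F ⊆ A.biUnion F ∪ B.biUnion F

namespace IsDisjointPairCover

variable {F : ι → Finset α}

lemma singleton (a : ι) : IsDisjointPairCover F {a} {a} ∅ where
  subset_left := subset_rfl
  subset_right := empty_subset _
  pairwiseDisjoint_left := by simp
  pairwiseDisjoint_right := by simp
  biUnion_subset := by simp

lemma card_biUnion_le {S A B : Finset ι} (h : IsDisjointPairCover F S A B) :
    (S.biUnion F).card ≤ (A.biUnion F).card + (B.biUnion F).card :=
  (card_le_card h.biUnion_subset).trans (card_union_le _ _)

variable [LinearOrder ι]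

lemma cons {T A B : Finset ι} {a j : ι} (h : IsDisjointPairCover F (T.filter (j ≤ ·)) A B)
    (hjA : j ∈ A) (hjB : j ∉ B)
    (hsep : ∀ k ∈ T, j < k → Disjoint (F a) (F k))
    (hmid : ∀ k ∈ T, k < j → F k ⊆ F a ∪ F j) :
    IsDisjointPairCover F (insert a T) (insert a B) A where
  subset_left := insert_subset_insert a (h.subset_right.trans (filter_subset _ _))
  subset_right := (h.subset_left.trans (filter_subset _ _)).trans (subset_insert a T)
  pairwiseDisjoint_left := by
    rw [coe_insert]
    refine h.pairwiseDisjoint_right.insert fun k hk _ => hsep k ?_ ?_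
    · exact (mem_filter.1 (h.subset_right hk)).1
    · exact lt_of_le_of_ne (mem_filter.1 (h.subset_right hk)).2
        (ne_of_mem_of_not_mem hk hjB).symm
  pairwiseDisjoint_right := h.pairwiseDisjoint_left
  biUnion_subset := by
    have hA : A.biUnion F ⊆ (insert a B).biUnion F ∪ A.biUnion F := subset_union_right
    have hB : B.biUnion F ⊆ (insert a B).biUnion F ∪ A.biUnion F :=
      (biUnion_subset_biUnion_of_subset_left F (subset_insert a B)).trans subset_union_left
    have ha : F a ⊆ (insert a B).biUnion F ∪ A.biUnion F :=
      (subset_biUnion_of_mem F (mem_insert_self a B)).trans subset_union_left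
    have hj : F j ⊆ (insert a B).biUnion F ∪ A.biUnion F :=
      (subset_biUnion_of_mem F hjA).trans hA
    refine Finset.biUnion_subset.2 fun k hk => ?_
    rcases mem_insert.1 hk with rfl | hkT
    · exact ha
    rcases lt_or_ge k j with hkj | hjk
    · exact (hmid k hkT hkj).trans (union_subset ha hj)
    · exact (subset_biUnion_of_mem F (mem_filter.2 ⟨hkT, hjk⟩)).trans
        (h.biUnion_subset.trans (union_subset hA hB))

end IsDisjointPairCover

variable [LinearOrder ι] {s t : ι → ℤ}

lemma monotone_of_not_Icc_subset (hs : Monotone s)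
    (hnest : ∀ i j, i ≠ j → ¬ Icc (s i) (t i) ⊆ Icc (s j) (t j)) : Monotone t := by
  intro i j hij
  by_contra! hji
  have hlt : i < j := lt_of_le_of_ne hij (by rintro rfl; exact lt_irrefl _ hji)
  exact hnest j i hlt.ne' (Icc_subset_Icc (hs hij) hji.le)

lemma exists_greedy_successor (hs : Monotone s) (ht : Monotone t) {a : ι} {T : Finset ι}
    (hT : T.Nonempty) (haT : ∀ k ∈ T, a ≤ k) :
    ∃ j ∈ T, (∀ k ∈ T, j < k → Disjoint (Icc (s a) (t a)) (Icc (s k) (t k))) ∧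
      ∀ k ∈ T, k < j → Icc (s k) (t k) ⊆ Icc (s a) (t a) ∪ Icc (s j) (t j) := by
  have disjoint_of_lt {k : ι} (hk : t a + 1 < s k) :
      Disjoint (Icc (s a) (t a)) (Icc (s k) (t k)) :=
    disjoint_left.2 fun x hxa hxk => by
      rw [mem_Icc] at hxa hxk
      omega
  by_cases hN : (T.filter fun k => s k ≤ t a + 1).Nonempty
  · set j := (T.filter fun k => s k ≤ t a + 1).max' hN
    have hjmem : j ∈ T.filter fun k => s k ≤ t a + 1 := max'_mem _ hN
    obtain ⟨hjT, hja⟩ := mem_filter.1 hjmem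
    refine ⟨j, hjT, fun k hkT hjk => disjoint_of_lt ?_, fun k hkT hkj x hx => ?_⟩
    · by_contra! hka
      exact (le_max' _ k (mem_filter.2 ⟨hkT, hka⟩)).not_gt hjk
    · have hsk := hs (haT k hkT)
      have htk := ht hkj.le
      simp only [mem_union, mem_Icc] at hx ⊢
      omega
  · refine ⟨T.min' hT, min'_mem T hT, fun k hkT _ => disjoint_of_lt ?_,
      fun k hkT hk => absurd (min'_le T k hkT) hk.not_ge⟩
    by_contra! hka
    exact hN ⟨k, mem_filter.2 ⟨hkT, hka⟩⟩

theorem exists_isDisjointPairCover_of_mem (hs : Monotone s) (ht : Monotone t)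
    (S : Finset ι) {a : ι} (ha : a ∈ S) (haS : ∀ k ∈ S, a ≤ k) :
    ∃ A B, IsDisjointPairCover (fun k => Icc (s k) (t k)) S A B ∧ a ∈ A ∧ a ∉ B := by
  induction S using Finset.strongInduction generalizing a with
  | H S ih =>
  rw [← insert_erase ha] at haS ⊢
  set T := S.erase a
  have haT : ∀ k ∈ T, a ≤ k := fun k hk => haS k (mem_insert_of_mem hk)
  rcases T.eq_empty_or_nonempty with hT | hT
  · rw [hT]
    exact ⟨{a}, ∅, .singleton a, mem_singleton_self a, notMem_empty a⟩
  obtain ⟨j, hjT, hsep, hmid⟩ := exists_greedy_successor hs ht hT haT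
  obtain ⟨A, B, hAB, hjA, hjB⟩ := ih (T.filter (j ≤ ·))
    ((filter_subset _ _).trans_ssubset (erase_ssubset ha)) (mem_filter.2 ⟨hjT, le_rfl⟩)
    fun k hk => (mem_filter.1 hk).2
  refine ⟨insert a B, A, hAB.cons hjA hjB hsep hmid, mem_insert_self a B, fun haA => ?_⟩
  exact notMem_erase a S (mem_filter.1 (hAB.subset_left haA)).1

theorem exists_isDisjointPairCover (hs : Monotone s) (ht : Monotone t) (S : Finset ι) :
    ∃ A B, IsDisjointPairCover (fun k => Icc (s k) (t k)) S A B := by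
  rcases S.eq_empty_or_nonempty with rfl | hS
  · exact ⟨∅, ∅, ⟨subset_rfl, subset_rfl, by simp, by simp, by simp⟩⟩
  obtain ⟨A, B, h, -⟩ :=
    exists_isDisjointPairCover_of_mem hs ht S (min'_mem S hS) fun k hk => min'_le S k hk
  exact ⟨A, B, h⟩

end IntervalSelection

theorem odd_even_interval_selection_general (m : ℕ) (s t : Fin m → ℤ)
    (hnocont : ∀ i j : Fin m, i ≠ j →
      ¬ (Finset.Icc (s i) (t i) ⊆ Finset.Icc (s j) (t j)))
    (hsorted : ∀ i j : Fin m, i ≤ j → s i ≤ s j) :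
    ∃ A B : Finset (Fin m),
      (∀ i ∈ A, ∀ j ∈ A, i ≠ j →
        Disjoint (Finset.Icc (s i) (t i)) (Finset.Icc (s j) (t j))) ∧
      (∀ i ∈ B, ∀ j ∈ B, i ≠ j →
        Disjoint (Finset.Icc (s i) (t i)) (Finset.Icc (s j) (t j))) ∧
      (A.biUnion (fun i => Finset.Icc (s i) (t i))).card +
        (B.biUnion (fun i => Finset.Icc (s i) (t i))).card ≥
        (Finset.univ.biUnion (fun i => Finset.Icc (s i) (t i))).card := by
  have hs : Monotone s := fun i j hij => hsorted i j hij
  obtain ⟨A, B, h⟩ :=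
    IntervalSelection.exists_isDisjointPairCover hs
      (IntervalSelection.monotone_of_not_Icc_subset hs hnocont) Finset.univ
  exact ⟨A, B, h.pairwiseDisjoint_left, h.pairwiseDisjoint_right, h.card_biUnion_le⟩

/-- From a family of integer intervals, none contained in another, sorted by starting
point, one can extract two subfamilies (odd- and even-indexed in the greedy selection),
each pairwise disjoint, whose unions together cover the union of the whole family. -/
theorem odd_even_interval_selection (m : ℕ) (s t : Fin m → ℤ)
    (hst : ∀ i, s i ≤ t i)
    (hnocont : ∀ i j : Fin m, i ≠ j →
      ¬ (Finset.Icc (s i) (t i) ⊆ Finset.Icc (s j) (t j)))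
    (hsorted : ∀ i j : Fin m, i ≤ j → s i ≤ s j) :
    ∃ A B : Finset (Fin m),
      (∀ i ∈ A, ∀ j ∈ A, i ≠ j →
        Disjoint (Finset.Icc (s i) (t i)) (Finset.Icc (s j) (t j))) ∧
      (∀ i ∈ B, ∀ j ∈ B, i ≠ j →
        Disjoint (Finset.Icc (s i) (t i)) (Finset.Icc (s j) (t j))) ∧
      (A.biUnion (fun i => Finset.Icc (s i) (t i))).card +
        (B.biUnion (fun i => Finset.Icc (s i) (t i))).card ≥
        (Finset.univ.biUnion (fun i => Finset.Icc (s i) (t i))).card :=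
  odd_even_interval_selection_general m s t hnocont hsorted
end
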